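/- arXiv:math/0606035 — 2 statements merged into one kernel-verified Lean document; each statement's English description precedes it below -/
import Mathlib

section
/- For each α ∈ ℕⁿ with |α| = k, the function w(y,s) = s^{-(k+n)/2} φ_α(y/(2√s)) e^{-|y|²/(8s)}, defined for s > 0, is forward caloric: Δw - ∂_s w = 0 on ℝⁿ × (0,∞); moreover w is the Appell transform of Q_α(x,t) = t^{k/2} φ_α(x/(2√t)) e^{|x|²/(8t)}. -/
open Real Finset

/-- The one-dimensional Hermite functions
`h k x = (2^k k! sqrt π)^{-1/2} (-1)^k e^{x²/2} (d/dx)^k e^{-x²}`. -/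
noncomputable def hermiteFn (k : ℕ) (x : ℝ) : ℝ :=
  (Real.sqrt (2 ^ k * (Nat.factorial k : ℝ) * Real.sqrt Real.pi))⁻¹ * (-1 : ℝ) ^ k *
    Real.exp (x ^ 2 / 2) * iteratedDeriv k (fun y : ℝ => Real.exp (-y ^ 2)) x

/-- The n-dimensional Hermite functions `φ_α x = ∏ j, h_{α j} (x j)`. -/
noncomputable def hermiteFnN (n : ℕ) (α : Fin n → ℕ) (x : EuclideanSpace ℝ (Fin n)) : ℝ :=
  ∏ j, hermiteFn (α j) (x j)

/-- The kernel `Φ_k(x,y) = ∑_{|α| = k} φ_α(x) φ_α(y)` of the projection onto Hermite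
functions of degree `k`. -/
noncomputable def PhiK (n k : ℕ) (x y : EuclideanSpace ℝ (Fin n)) : ℝ :=
  ∑ α ∈ Finset.Nat.antidiagonalTuple n k, hermiteFnN n α x * hermiteFnN n α y

/-- The Laplacian of `f : ℝⁿ → ℝ`, as the sum of the second derivatives along the
coordinate directions. -/
noncomputable def lap (n : ℕ) (f : EuclideanSpace ℝ (Fin n) → ℝ)
    (x : EuclideanSpace ℝ (Fin n)) : ℝ :=
  ∑ j : Fin n, iteratedDeriv 2 (fun t : ℝ => f (x + t • EuclideanSpace.single j (1 : ℝ))) 0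

/-- The backward caloric functions `Q_α(x,t) = t^{|α|/2} φ_α(x/(2√t)) e^{|x|²/(8t)}`. -/
noncomputable def Qfun (n : ℕ) (α : Fin n → ℕ) (x : EuclideanSpace ℝ (Fin n)) (t : ℝ) : ℝ :=
  Real.sqrt t ^ (∑ j, α j) * hermiteFnN n α ((2 * Real.sqrt t)⁻¹ • x) *
    Real.exp (‖x‖ ^ 2 / (8 * t))

/-!
Since `(x / (2√s))² / 2 = x² / (8s)`, the Gaussian factor of the Hermite function cancels
`e^{-x²/(8s)}`: up to a constant, the `j`-th coordinate factor of `w` is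
`g_k(x, s) = s^{-(k+1)/2} D_k(x / (2√s))` with `D_k = (d/du)ᵏ e^{-u²}` and `k = α j`, i.e. `2ᵏ ∂ₓᵏ`
of the heat kernel `s^{-1/2} e^{-x²/(4s)}`. It solves the one-dimensional heat equation because
`∂ₓ g_k = g_{k+1} / 2`, `∂ₛ g_k = -((k+1) g_k + (x/2) g_{k+1}) / (2s)` and the Hermite recursion
`D_{k+2}(u) = -2u D_{k+1}(u) - 2(k+1) D_k(u)`. As `-(k+n)/2 = ∑ⱼ -(α j + 1)/2`, `w` is a product
of such solutions in separate variables, hence caloric on `ℝⁿ`. The Appell identity is a direct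
substitution.
-/

open scoped ContDiff

noncomputable def gaussianDeriv (k : ℕ) : ℝ → ℝ := iteratedDeriv k fun u => exp (-u ^ 2)

lemma contDiff_gaussianDeriv (k : ℕ) : ContDiff ℝ ∞ (gaussianDeriv k) := by
  rw [gaussianDeriv, iteratedDeriv_eq_iterate]
  exact ((contDiff_id.pow 2).neg.exp).iterate_deriv k

lemma hasDerivAt_gaussianDeriv (k : ℕ) (u : ℝ) :
    HasDerivAt (gaussianDeriv k) (gaussianDeriv (k + 1) u) u := by
  have h := ((contDiff_gaussianDeriv k).differentiable (by simp) u).hasDerivAt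
  rwa [gaussianDeriv, ← iteratedDeriv_succ] at h

lemma gaussianDeriv_one (u : ℝ) : gaussianDeriv 1 u = -2 * u * gaussianDeriv 0 u := by
  have h : HasDerivAt (fun u => exp (-u ^ 2)) (exp (-u ^ 2) * -(2 * u)) u := by
    simpa using ((hasDerivAt_pow 2 u).neg).exp
  rw [gaussianDeriv, iteratedDeriv_one, h.deriv, gaussianDeriv, iteratedDeriv_zero]
  ring

lemma hasDerivAt_gaussianDeriv_recursion (c : ℝ) (m j : ℕ) (u : ℝ) :
    HasDerivAt (fun u => -2 * u * gaussianDeriv m u - c * gaussianDeriv j u)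
      (-2 * gaussianDeriv m u - 2 * u * gaussianDeriv (m + 1) u
        - c * gaussianDeriv (j + 1) u) u := by
  have h := (((hasDerivAt_id u).const_mul (-2)).mul (hasDerivAt_gaussianDeriv m u)).sub
    ((hasDerivAt_gaussianDeriv j u).const_mul c)
  exact h.congr_deriv (by simp only [id]; ring)

lemma gaussianDeriv_add_two (k : ℕ) (u : ℝ) :
    gaussianDeriv (k + 2) u
      = -2 * u * gaussianDeriv (k + 1) u - 2 * (k + 1) * gaussianDeriv k u := by
  induction k generalizing u with
  | zero =>
    have h1 : gaussianDeriv 1 = fun u => -2 * u * gaussianDeriv 0 u - 0 * gaussianDeriv 0 u := by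
      funext u; rw [gaussianDeriv_one]; ring
    have h := hasDerivAt_gaussianDeriv 1 u
    rw [h1] at h
    have := (hasDerivAt_gaussianDeriv_recursion 0 0 0 u).unique h
    push_cast
    linarith
  | succ k ih =>
    have h := hasDerivAt_gaussianDeriv (k + 2) u
    rw [funext ih] at h
    have := (hasDerivAt_gaussianDeriv_recursion _ (k + 1) k u).unique h
    push_cast
    linarith

noncomputable def heatKernelDeriv (k : ℕ) (x s : ℝ) : ℝ :=
  (√s)⁻¹ ^ (k + 1) * gaussianDeriv k ((2 * √s)⁻¹ * x)

lemma hasDerivAt_heatKernelDeriv_fst (k : ℕ) (x s : ℝ) :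
    HasDerivAt (heatKernelDeriv k · s) (heatKernelDeriv (k + 1) x s / 2) x := by
  have h := ((hasDerivAt_gaussianDeriv k _).comp x
    ((hasDerivAt_id x).const_mul (2 * √s)⁻¹)).const_mul ((√s)⁻¹ ^ (k + 1))
  refine h.congr_deriv ?_
  simp only [heatKernelDeriv, id, mul_one, mul_inv]
  ring

lemma iteratedDeriv_two_heatKernelDeriv (k : ℕ) (x s : ℝ) :
    iteratedDeriv 2 (heatKernelDeriv k · s) x = heatKernelDeriv (k + 2) x s / 4 := by
  have hderiv : deriv (heatKernelDeriv k · s) = fun x => heatKernelDeriv (k + 1) x s / 2 :=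
    funext fun x => (hasDerivAt_heatKernelDeriv_fst k x s).deriv
  rw [iteratedDeriv_succ, iteratedDeriv_one, hderiv,
    ((hasDerivAt_heatKernelDeriv_fst (k + 1) x s).div_const 2).deriv]
  ring

lemma hasDerivAt_heatKernelDeriv_snd (k : ℕ) (x : ℝ) {s : ℝ} (hs : 0 < s) :
    HasDerivAt (heatKernelDeriv k x)
      (-((k + 1) * heatKernelDeriv k x s + x / 2 * heatKernelDeriv (k + 1) x s) / (2 * s)) s := by
  have hsqrt : √s ≠ 0 := (sqrt_pos.mpr hs).ne'
  have hinv : HasDerivAt (fun t => (√t)⁻¹) (-(√s)⁻¹ / (2 * s)) s := by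
    refine ((hasDerivAt_sqrt hs.ne').fun_inv hsqrt).congr_deriv ?_
    rw [sq_sqrt hs.le]
    field_simp
  have hu : HasDerivAt (fun t => (2 * √t)⁻¹ * x) (-((2 * √s)⁻¹ * x) / (2 * s)) s := by
    simp only [mul_inv]
    exact ((hinv.const_mul 2⁻¹).mul_const x).congr_deriv (by ring)
  refine ((hinv.fun_pow (k + 1)).fun_mul
    ((hasDerivAt_gaussianDeriv k _).comp s hu)).congr_deriv ?_
  simp only [heatKernelDeriv, Function.comp_apply, mul_inv]
  push_cast
  ring

lemma heatKernelDeriv_add_two (k : ℕ) (x : ℝ) {s : ℝ} (hs : 0 < s) :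
    heatKernelDeriv (k + 2) x s
      = -(x / s) * heatKernelDeriv (k + 1) x s - 2 * (k + 1) / s * heatKernelDeriv k x s := by
  have hs' : (√s)⁻¹ ^ 2 = s⁻¹ := by rw [inv_pow, sq_sqrt hs.le]
  simp only [heatKernelDeriv, gaussianDeriv_add_two, mul_inv, div_eq_mul_inv, ← hs']
  ring

lemma heatKernelDeriv_heatEquation (k : ℕ) (x : ℝ) {s : ℝ} (hs : 0 < s) :
    HasDerivAt (heatKernelDeriv k x) (iteratedDeriv 2 (heatKernelDeriv k · s) x) s := by
  refine (hasDerivAt_heatKernelDeriv_snd k x hs).congr_deriv ?_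
  rw [iteratedDeriv_two_heatKernelDeriv, heatKernelDeriv_add_two k x hs]
  field_simp
  ring

noncomputable def hermiteCaloric (k : ℕ) (x s : ℝ) : ℝ :=
  (√s)⁻¹ ^ (k + 1) * hermiteFn k ((2 * √s)⁻¹ * x) * exp (-x ^ 2 / (8 * s))

lemma hermiteCaloric_eq (k : ℕ) (x : ℝ) {s : ℝ} (hs : 0 < s) :
    hermiteCaloric k x s
      = (√(2 ^ k * (k.factorial : ℝ) * √π))⁻¹ * (-1) ^ k * heatKernelDeriv k x s := by
  have hexp : exp (((2 * √s)⁻¹ * x) ^ 2 / 2) * exp (-x ^ 2 / (8 * s)) = 1 := by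
    rw [← exp_add, ← exp_zero]
    congr 1
    rw [mul_pow, inv_pow, mul_pow, sq_sqrt hs.le]
    field_simp
    ring
  simp only [hermiteCaloric, hermiteFn, heatKernelDeriv, gaussianDeriv]
  linear_combination ((√s)⁻¹ ^ (k + 1) * (√(2 ^ k * (k.factorial : ℝ) * √π))⁻¹ * (-1) ^ k *
    iteratedDeriv k (fun y => exp (-y ^ 2)) ((2 * √s)⁻¹ * x)) * hexp

lemma hermiteCaloric_heatEquation (k : ℕ) (x : ℝ) {s : ℝ} (hs : 0 < s) :
    HasDerivAt (hermiteCaloric k x) (iteratedDeriv 2 (hermiteCaloric k · s) x) s := by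
  have hnear : hermiteCaloric k x =ᶠ[nhds s]
      fun t => (√(2 ^ k * (k.factorial : ℝ) * √π))⁻¹ * (-1) ^ k * heatKernelDeriv k x t := by
    filter_upwards [Ioi_mem_nhds hs] with t ht using hermiteCaloric_eq k x ht
  have hslice : (hermiteCaloric k · s)
      = fun x => (√(2 ^ k * (k.factorial : ℝ) * √π))⁻¹ * (-1) ^ k * heatKernelDeriv k x s :=
    funext fun x => hermiteCaloric_eq k x hs
  rw [hslice, iteratedDeriv_const_mul_field]
  exact ((heatKernelDeriv_heatEquation k x hs).const_mul _).congr_of_eventuallyEq hnear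

lemma lap_prod (n : ℕ) (f : Fin n → ℝ → ℝ) (y : EuclideanSpace ℝ (Fin n)) :
    lap n (fun z => ∏ j, f j (z j)) y
      = ∑ j, (∏ i ∈ univ.erase j, f i (y i)) * iteratedDeriv 2 (f j) (y j) := by
  refine sum_congr rfl fun j _ => ?_
  have hline : (fun t : ℝ => ∏ i, f i ((y + t • EuclideanSpace.single j (1 : ℝ)) i))
      = fun t => (∏ i ∈ univ.erase j, f i (y i)) * f j (y j + t) := by
    funext t
    rw [← prod_erase_mul univ _ (mem_univ j)]
    congr 1
    · refine prod_congr rfl fun i hi => ?_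
      simp [(mem_erase.mp hi).1]
    · simp
  rw [hline, iteratedDeriv_const_mul_field, iteratedDeriv_comp_const_add]
  simp only [add_zero]

lemma lap_prod_sub_deriv_eq_zero (n : ℕ) (f : Fin n → ℝ → ℝ → ℝ) (y : EuclideanSpace ℝ (Fin n))
    {s : ℝ} (hf : ∀ j, HasDerivAt (f j (y j)) (iteratedDeriv 2 (f j · s) (y j)) s) :
    lap n (fun z => ∏ j, f j (z j) s) y - deriv (fun t => ∏ j, f j (y j) t) s = 0 := by
  rw [lap_prod n (f · · s), (HasDerivAt.fun_finsetProd fun j _ => hf j).deriv, sub_eq_zero]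
  simp only [smul_eq_mul]

lemma exp_neg_norm_sq_div (n : ℕ) (y : EuclideanSpace ℝ (Fin n)) (c : ℝ) :
    exp (-‖y‖ ^ 2 / c) = ∏ j, exp (-y j ^ 2 / c) := by
  simp only [EuclideanSpace.norm_sq_eq, norm_eq_abs, sq_abs, ← exp_sum, neg_div, sum_neg_distrib,
    sum_div]

lemma prod_hermiteCaloric (n : ℕ) (α : Fin n → ℕ) (y : EuclideanSpace ℝ (Fin n)) (s : ℝ) :
    ∏ j, hermiteCaloric (α j) (y j) s = (√s)⁻¹ ^ (∑ j, α j + n) *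
      hermiteFnN n α ((2 * √s)⁻¹ • y) * exp (-‖y‖ ^ 2 / (8 * s)) := by
  have hpow : (√s)⁻¹ ^ (∑ j, α j + n) = ∏ j, (√s)⁻¹ ^ (α j + 1) := by
    rw [prod_pow_eq_pow_sum, sum_add_distrib, sum_const, card_univ, Fintype.card_fin, smul_eq_mul,
      mul_one]
  simp only [hpow, hermiteFnN, exp_neg_norm_sq_div, hermiteCaloric, ← prod_mul_distrib,
    PiLp.smul_apply, smul_eq_mul]

lemma rpow_neg_natCast_div_two {s : ℝ} (hs : 0 ≤ s) (m : ℕ) : s ^ (-(m : ℝ) / 2) = (√s)⁻¹ ^ m := by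
  rw [sqrt_eq_rpow, ← rpow_natCast, inv_rpow (by positivity), ← rpow_mul hs, ← rpow_neg hs]
  ring_nf

lemma Qfun_inv_smul_inv (n : ℕ) (α : Fin n → ℕ) (y : EuclideanSpace ℝ (Fin n)) {s : ℝ}
    (hs : 0 < s) :
    Qfun n α (s⁻¹ • y) s⁻¹
      = (√s)⁻¹ ^ (∑ j, α j) * hermiteFnN n α ((2 * √s)⁻¹ • y) * exp (‖y‖ ^ 2 / (8 * s)) := by
  have harg : (2 * √s⁻¹)⁻¹ • s⁻¹ • y = (2 * √s)⁻¹ • y := by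
    rw [smul_smul, sqrt_inv]
    congr 1
    field_simp
    rw [sq_sqrt hs.le]
  have hexp : ‖s⁻¹ • y‖ ^ 2 / (8 * s⁻¹) = ‖y‖ ^ 2 / (8 * s) := by
    rw [norm_smul, norm_inv, norm_eq_abs, abs_of_pos hs]
    field_simp
  rw [Qfun, harg, hexp, sqrt_inv]

theorem appell_of_Qfun_forward_caloric (n : ℕ) (α : Fin n → ℕ) (k : ℕ) (hk : ∑ j, α j = k)
    (w : EuclideanSpace ℝ (Fin n) → ℝ → ℝ)
    (hw : ∀ (y : EuclideanSpace ℝ (Fin n)) (s : ℝ), 0 < s →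
      w y s = s ^ (-((k : ℝ) + n) / 2) * hermiteFnN n α ((2 * Real.sqrt s)⁻¹ • y) *
        Real.exp (-‖y‖ ^ 2 / (8 * s))) :
    (∀ (y : EuclideanSpace ℝ (Fin n)) (s : ℝ), 0 < s →
      lap n (fun z => w z s) y - deriv (w y) s = 0) ∧
    (∀ (y : EuclideanSpace ℝ (Fin n)) (s : ℝ), 0 < s →
      w y s = s ^ (-(n : ℝ) / 2) * Real.exp (-‖y‖ ^ 2 / (4 * s)) * Qfun n α (s⁻¹ • y) s⁻¹) := by
  have hpow : ∀ s : ℝ, 0 < s → s ^ (-((k : ℝ) + n) / 2) = (√s)⁻¹ ^ (k + n) := fun s hs => by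
    exact_mod_cast rpow_neg_natCast_div_two hs.le (k + n)
  have hw_prod : ∀ y s, 0 < s → w y s = ∏ j, hermiteCaloric (α j) (y j) s := fun y s hs => by
    rw [hw y s hs, prod_hermiteCaloric, hk, hpow s hs]
  refine ⟨fun y s hs => ?_, fun y s hs => ?_⟩
  · have hslice : (fun z => w z s) = fun z => ∏ j, hermiteCaloric (α j) (z j) s :=
      funext fun z => hw_prod z s hs
    have hnear : w y =ᶠ[nhds s] fun t => ∏ j, hermiteCaloric (α j) (y j) t := by
      filter_upwards [Ioi_mem_nhds hs] with t ht using hw_prod y t ht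
    rw [hslice, hnear.deriv_eq]
    exact lap_prod_sub_deriv_eq_zero n _ y fun j => hermiteCaloric_heatEquation _ _ hs
  · have hexp : exp (-‖y‖ ^ 2 / (4 * s)) * exp (‖y‖ ^ 2 / (8 * s)) = exp (-‖y‖ ^ 2 / (8 * s)) := by
      rw [← exp_add]
      congr 1
      field_simp
      ring
    rw [hw y s hs, Qfun_inv_smul_inv n α y hs, hk, hpow s hs, rpow_neg_natCast_div_two hs.le,
      ← hexp]
    ring
end

section
/- For fixed y ∈ ℝⁿ and s > 0, each term in the expansion of the backward Gaussian kernel, namely (x,t) ↦ (t/s)^{k/2} e^{|x|²/(8t)} Φ_k(x/(2√t), y/(2√s)), extends to a polynomial in (x,t) that is parabolically homogeneous of degree k and backward caloric. -/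
open Real Finset

/-!
For `t > 0` the term equals `∑_{|α| = k} s^{-k/2} φ_α(y/(2√s)) Q_α(x, t)`, and
`Q_α(x,t) = t^{|α|/2} φ_α(x/(2√t)) e^{|x|²/(8t)}` is a product over the coordinates of
`√tᵐ e^{u²/(8t)} h_m(u/(2√t))`, a multiple of the heat polynomial `H_m(u, t)` defined by
`H_0 = 1`, `H_{m+1} = u H_m - 2t ∂_u H_m`; this recursion is the Rodrigues formula for `h_m`
differentiated once more.
The recursion shows that `H_m` only has monomials `u^i t^j` with `i + 2j = m` and that
`∂_t H_m = -∂_u² H_m`. A product of such polynomials in distinct space variables and a common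
time variable is again backward caloric, since the cross terms of the Leibniz rule vanish.
-/

namespace MvPolynomial

section Algebra

variable {R σ : Type*} [CommRing R]

theorem pderiv_pderiv_comm (i j : σ) (p : MvPolynomial σ R) :
    pderiv i (pderiv j p) = pderiv j (pderiv i p) := by
  have h : ⁅pderiv i, pderiv j⁆ = (0 : Derivation R (MvPolynomial σ R) (MvPolynomial σ R)) :=
    derivation_ext fun k => by
      classical
      rw [Derivation.commutator_apply]
      simp only [pderiv_X, Pi.single_apply]
      split_ifs <;> simp
  simpa [Derivation.commutator_apply, sub_eq_zero] using congrArg (· p) h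

theorem pderiv_prod_eq_zero {ι : Type*} {s : Finset ι} {f : ι → MvPolynomial σ R} {i : σ}
    (h : ∀ j ∈ s, pderiv i (f j) = 0) : pderiv i (∏ j ∈ s, f j) = 0 :=
  Finset.prod_induction f (fun p => pderiv i p = 0)
    (fun p q hp hq => by simp [Derivation.leibniz, hp, hq]) (by simp) h

variable (R) in
noncomputable def heatPoly (i T : σ) : ℕ → MvPolynomial σ R
  | 0 => 1
  | m + 1 => X i * heatPoly i T m - 2 • (X T * pderiv i (heatPoly i T m))

variable {i T : σ}

theorem pderiv_heatPoly_of_ne {k : σ} (hi : k ≠ i) (hT : k ≠ T) (m : ℕ) :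
    pderiv k (heatPoly R i T m) = 0 := by
  induction m with
  | zero => simp [heatPoly]
  | succ m ih =>
    simp only [heatPoly, map_sub, map_nsmul, Derivation.leibniz, smul_eq_mul,
      pderiv_X_of_ne hi.symm, pderiv_X_of_ne hT.symm, pderiv_pderiv_comm k i, ih]
    simp

theorem pderiv_time_heatPoly (h : i ≠ T) (m : ℕ) :
    pderiv T (heatPoly R i T m) = -pderiv i (pderiv i (heatPoly R i T m)) := by
  induction m with
  | zero => simp [heatPoly]
  | succ m ih =>
    simp only [heatPoly, map_sub, map_add, map_neg, map_nsmul, Derivation.leibniz, smul_eq_mul,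
      pderiv_X_self, pderiv_X_of_ne h, pderiv_X_of_ne h.symm, pderiv_pderiv_comm T i, ih,
      pderiv_one, map_zero]
    ring

theorem isWeightedHomogeneous_heatPoly {w : σ → ℕ} (hi : w i = 1) (hT : w T = 2) (m : ℕ) :
    (heatPoly R i T m).IsWeightedHomogeneous w m := by
  induction m with
  | zero => exact isWeightedHomogeneous_one R w
  | succ m ih =>
    refine .sub (by simpa [hi, add_comm] using (isWeightedHomogeneous_X R w i).mul ih) ?_
    cases m with
    | zero => simpa [heatPoly] using isWeightedHomogeneous_zero R w 1
    | succ m =>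
      have h := (isWeightedHomogeneous_X R w T).mul (ih.pderiv (i := i) (n' := m) (by simp [hi]))
      rw [hT, show 2 + m = m + 1 + 1 by omega] at h
      rw [two_nsmul]
      exact h.add h

theorem IsWeightedHomogeneous.eval_pow_weight_mul {S : Type*} [CommSemiring S] {w : σ → ℕ}
    {p : MvPolynomial σ S} {m : ℕ} (hp : p.IsWeightedHomogeneous w m) (l : S) (v : σ → S) :
    eval (fun i => l ^ w i * v i) p = l ^ m * eval v p := by
  induction hp using IsWeightedHomogeneous.induction_on with
  | zero => simp
  | add p q _ _ hp hq => simp [hp, hq, mul_add]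
  | monomial d r hr =>
    have hl : (d.prod fun i e => (l ^ w i) ^ e) = l ^ m := by
      simp only [Finsupp.prod, ← pow_mul, Finset.prod_pow_eq_pow_sum, ← hr,
        Finsupp.weight_apply, Finsupp.sum, smul_eq_mul, mul_comm]
    simp only [eval_monomial, mul_pow, Finsupp.prod_mul, hl]
    ring

variable {ι : Type*} [Fintype ι]

variable (R) in
noncomputable def backwardHeatOperator (x : ι → σ) (T : σ) :
    MvPolynomial σ R →ₗ[R] MvPolynomial σ R :=
  ∑ j, (pderiv (x j)).toLinearMap ∘ₗ (pderiv (x j)).toLinearMap + (pderiv T).toLinearMap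

variable {x : ι → σ}

theorem backwardHeatOperator_apply (p : MvPolynomial σ R) :
    backwardHeatOperator R x T p = ∑ j, pderiv (x j) (pderiv (x j) p) + pderiv T p := by
  simp [backwardHeatOperator]

theorem backwardHeatOperator_mul (f g : MvPolynomial σ R) :
    backwardHeatOperator R x T (f * g) = backwardHeatOperator R x T f * g +
      f * backwardHeatOperator R x T g + 2 * ∑ j, pderiv (x j) f * pderiv (x j) g := by
  have hsecond (j : ι) : pderiv (x j) (pderiv (x j) (f * g)) =
      pderiv (x j) (pderiv (x j) f) * g + f * pderiv (x j) (pderiv (x j) g) +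
        2 * (pderiv (x j) f * pderiv (x j) g) := by
    simp only [Derivation.leibniz, map_add, smul_eq_mul]
    ring
  simp only [backwardHeatOperator_apply]
  rw [Finset.sum_congr rfl fun j _ => hsecond j, Finset.sum_add_distrib, Finset.sum_add_distrib,
    ← Finset.sum_mul, ← Finset.mul_sum, ← Finset.mul_sum, Derivation.leibniz, smul_eq_mul,
    smul_eq_mul]
  ring

theorem backwardHeatOperator_prod_eq_zero {f : ι → MvPolynomial σ R}
    (hsep : ∀ j k, k ≠ j → pderiv (x k) (f j) = 0)
    (hf : ∀ j, backwardHeatOperator R x T (f j) = 0) (s : Finset ι) :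
    backwardHeatOperator R x T (∏ j ∈ s, f j) = 0 := by
  classical
  induction s using Finset.induction_on with
  | empty => simp [backwardHeatOperator_apply]
  | insert a s ha ih =>
    have hcross (k : ι) : pderiv (x k) (f a) * pderiv (x k) (∏ j ∈ s, f j) = 0 := by
      rcases eq_or_ne k a with rfl | hk
      · rw [pderiv_prod_eq_zero fun j hj => hsep j k (ne_of_mem_of_not_mem hj ha).symm, mul_zero]
      · rw [hsep a k hk, zero_mul]
    simp [Finset.prod_insert ha, backwardHeatOperator_mul, hf a, ih, hcross]

theorem backwardHeatOperator_heatPoly (hx : Function.Injective x) (hT : ∀ k, x k ≠ T) (j : ι)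
    (m : ℕ) : backwardHeatOperator R x T (heatPoly R (x j) T m) = 0 := by
  rw [backwardHeatOperator_apply, Finset.sum_eq_single j, pderiv_time_heatPoly (hT j),
    add_neg_cancel]
  · intro k _ hk
    rw [pderiv_heatPoly_of_ne (hx.ne hk) (hT k), map_zero]
  · simp

end Algebra

section Calculus

variable {𝕜 σ : Type*} [NontriviallyNormedField 𝕜] [DecidableEq σ]

theorem hasDerivAt_eval_add_smul_single (p : MvPolynomial σ 𝕜) (v : σ → 𝕜) (i : σ)
    (r : 𝕜) : HasDerivAt (fun r => eval (v + r • (Pi.single i 1 : σ → 𝕜)) p)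
      (eval (v + r • (Pi.single i 1 : σ → 𝕜)) (pderiv i p)) r := by
  induction p using MvPolynomial.induction_on with
  | C a => simpa using hasDerivAt_const r a
  | add p q hp hq => simp only [map_add]; exact hp.add hq
  | mul_X p k hp =>
    set e : σ → 𝕜 := Pi.single i 1
    have hk : HasDerivAt (fun r => v k + r * e k) (e k) r := by
      simpa using ((hasDerivAt_id r).mul_const (e k)).const_add (v k)
    have hpX : pderiv i (p * X k) = p * C (e k) + X k * pderiv i p := by
      rcases eq_or_ne k i with rfl | hki
      · simp [e, Derivation.leibniz]
      · simp [e, Derivation.leibniz, pderiv_X_of_ne hki, hki]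
    have hfun : (fun r => eval (v + r • e) (p * X k)) =
        fun r => eval (v + r • e) p * (v k + r * e k) := by
      funext r
      simp
    rw [hfun, hpX]
    refine (hp.mul hk).congr_deriv ?_
    simp only [map_add, map_mul, eval_X, eval_C, Pi.add_apply, Pi.smul_apply, smul_eq_mul]
    ring

theorem deriv_eval_add_smul_single (p : MvPolynomial σ 𝕜) (v : σ → 𝕜) (i : σ) :
    deriv (fun r : 𝕜 => eval (v + r • (Pi.single i 1 : σ → 𝕜)) p) =
      fun r => eval (v + r • (Pi.single i 1 : σ → 𝕜)) (pderiv i p) := by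
  funext r
  exact (hasDerivAt_eval_add_smul_single p v i r).deriv

theorem iteratedDeriv_two_eval_add_smul_single (p : MvPolynomial σ 𝕜) (v : σ → 𝕜)
    (i : σ) : iteratedDeriv 2 (fun r : 𝕜 => eval (v + r • (Pi.single i 1 : σ → 𝕜)) p) =
      fun r => eval (v + r • (Pi.single i 1 : σ → 𝕜)) (pderiv i (pderiv i p)) := by
  rw [iteratedDeriv_succ, iteratedDeriv_one, deriv_eval_add_smul_single,
    deriv_eval_add_smul_single]

end Calculus

end MvPolynomial

open MvPolynomial

theorem inv_two_sqrt_mul_sq {t : ℝ} (ht : 0 ≤ t) (u : ℝ) :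
    ((2 * √t)⁻¹ * u) ^ 2 = u ^ 2 / (4 * t) := by
  rw [mul_pow, inv_pow, mul_pow, sq_sqrt ht]
  ring

noncomputable def heatHermite (m : ℕ) (t u : ℝ) : ℝ :=
  (-1) ^ m * √t ^ m * exp (u ^ 2 / (4 * t)) *
    iteratedDeriv m (fun y : ℝ => exp (-y ^ 2)) ((2 * √t)⁻¹ * u)

theorem heatHermite_succ {t : ℝ} (ht : 0 < t) (m : ℕ) (u : ℝ) :
    heatHermite (m + 1) t u = u * heatHermite m t u - 2 * t * deriv (heatHermite m t) u := by
  set G : ℕ → ℝ → ℝ := fun m => iteratedDeriv m (fun y : ℝ => exp (-y ^ 2))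
  have hG : HasDerivAt (fun u => G m ((2 * √t)⁻¹ * u))
      (G (m + 1) ((2 * √t)⁻¹ * u) * (2 * √t)⁻¹) u := by
    have hdiff : Differentiable ℝ (G m) :=
      (contDiff_exp.comp (contDiff_id.pow 2).neg).differentiable_iteratedDeriv m
        (WithTop.coe_lt_top _)
    have := (hdiff _).hasDerivAt.comp u ((hasDerivAt_id u).const_mul (2 * √t)⁻¹)
    rwa [mul_one, ← iteratedDeriv_succ] at this
  have hE : HasDerivAt (fun u => exp (u ^ 2 / (4 * t)))
      (exp (u ^ 2 / (4 * t)) * (2 * u / (4 * t))) u := by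
    simpa using ((hasDerivAt_pow 2 u).div_const (4 * t)).exp
  have hH : HasDerivAt (heatHermite m t) ((-1) ^ m * √t ^ m *
      (exp (u ^ 2 / (4 * t)) * (2 * u / (4 * t)) * G m ((2 * √t)⁻¹ * u) +
        exp (u ^ 2 / (4 * t)) * (G (m + 1) ((2 * √t)⁻¹ * u) * (2 * √t)⁻¹))) u := by
    refine ((hE.mul hG).const_mul ((-1 : ℝ) ^ m * √t ^ m)).congr_of_eventuallyEq
      (Filter.Eventually.of_forall fun w => ?_)
    simp only [heatHermite, G, Pi.mul_apply]
    ring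
  have hst : √t ^ 2 = t := sq_sqrt ht.le
  have hs : √t ≠ 0 := (sqrt_pos.mpr ht).ne'
  rw [hH.deriv]
  simp only [heatHermite, G]
  field_simp
  linear_combination (-4 * (-1) ^ m * √t ^ m * G (m + 1) (u / (2 * √t))) * hst

theorem eval_heatPoly {σ : Type*} {i T : σ} (hiT : i ≠ T) (m : ℕ) (v : σ → ℝ)
    (ht : 0 < v T) : eval v (heatPoly ℝ i T m) = heatHermite m (v T) (v i) := by
  classical
  induction m generalizing v with
  | zero =>
    simp only [heatPoly, heatHermite, map_one, pow_zero, one_mul, iteratedDeriv_zero]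
    rw [inv_two_sqrt_mul_sq ht.le, ← exp_add, add_neg_cancel, exp_zero]
  | succ m ih =>
    have hline : (fun r => eval (v + r • (Pi.single i 1 : σ → ℝ)) (heatPoly ℝ i T m)) =
        fun r => heatHermite m (v T) (v i + r) := by
      funext r
      rw [ih _ (by simpa [hiT.symm] using ht)]
      simp [hiT.symm]
    have hpderiv : eval v (pderiv i (heatPoly ℝ i T m)) = deriv (heatHermite m (v T)) (v i) := by
      have h := congrFun (deriv_eval_add_smul_single (heatPoly ℝ i T m) v i) 0
      rw [hline, deriv_comp_const_add] at h
      simpa using h.symm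
    simp only [heatPoly, map_sub, map_mul, map_nsmul, eval_X, ih v ht, hpderiv, heatHermite_succ ht]
    rw [nsmul_eq_mul]
    ring

noncomputable def hermiteNormConst (m : ℕ) : ℝ :=
  (√(2 ^ m * (m.factorial : ℝ) * √π))⁻¹

theorem sqrt_pow_mul_exp_mul_hermiteFn {t : ℝ} (ht : 0 < t) (m : ℕ) (u : ℝ) :
    √t ^ m * exp (u ^ 2 / (8 * t)) * hermiteFn m ((2 * √t)⁻¹ * u) =
      hermiteNormConst m * heatHermite m t u := by
  have hexp : exp (u ^ 2 / (4 * t)) = exp (u ^ 2 / (8 * t)) * exp (u ^ 2 / (8 * t)) := by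
    rw [← exp_add]; ring_nf
  rw [hermiteFn, heatHermite, hermiteNormConst, inv_two_sqrt_mul_sq ht.le, hexp]
  ring_nf

noncomputable def parabolicWeight (n : ℕ) : Fin (n + 1) → ℕ :=
  Fin.snoc (fun _ => 1) 2

theorem snoc_smul_eq_pow_parabolicWeight_mul {n : ℕ} (l : ℝ) (x : EuclideanSpace ℝ (Fin n))
    (t : ℝ) : (Fin.snoc (fun j => (l • x) j) (l ^ 2 * t) : Fin (n + 1) → ℝ) =
      fun i => l ^ parabolicWeight n i * (Fin.snoc (fun j => x j) t : Fin (n + 1) → ℝ) i := by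
  funext i
  induction i using Fin.lastCases <;> simp [parabolicWeight]

noncomputable def caloricPoly (n : ℕ) (α : Fin n → ℕ) : MvPolynomial (Fin (n + 1)) ℝ :=
  (∏ j, hermiteNormConst (α j)) • ∏ j, heatPoly ℝ j.castSucc (Fin.last n) (α j)

theorem eval_caloricPoly {n : ℕ} (α : Fin n → ℕ) (x : EuclideanSpace ℝ (Fin n)) {t : ℝ}
    (ht : 0 < t) : eval (Fin.snoc (fun j => x j) t) (caloricPoly n α) = Qfun n α x t := by
  have hexp : exp (‖x‖ ^ 2 / (8 * t)) = ∏ j, exp (x j ^ 2 / (8 * t)) := by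
    rw [EuclideanSpace.real_norm_sq_eq, Finset.sum_div, exp_sum]
  simp only [caloricPoly, smul_eval, map_prod, Qfun, hermiteFnN, hexp,
    ← Finset.prod_pow_eq_pow_sum, ← Finset.prod_mul_distrib]
  refine Finset.prod_congr rfl fun j _ => ?_
  rw [eval_heatPoly (Fin.castSucc_ne_last j) _ _ (by simpa using ht), Fin.snoc_castSucc,
    Fin.snoc_last, ← sqrt_pow_mul_exp_mul_hermiteFn ht]
  simp only [PiLp.smul_apply, smul_eq_mul]
  ring

theorem isWeightedHomogeneous_caloricPoly {n : ℕ} (α : Fin n → ℕ) :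
    (caloricPoly n α).IsWeightedHomogeneous (parabolicWeight n) (∑ j, α j) := by
  have h := (IsWeightedHomogeneous.prod Finset.univ _ α fun j _ =>
    isWeightedHomogeneous_heatPoly (R := ℝ) (w := parabolicWeight n) (i := j.castSucc)
      (T := Fin.last n) (by simp [parabolicWeight]) (by simp [parabolicWeight]) (α j)).C_mul
    (∏ j, hermiteNormConst (α j))
  rwa [C_mul'] at h

theorem backwardHeatOperator_caloricPoly {n : ℕ} (α : Fin n → ℕ) :
    backwardHeatOperator ℝ Fin.castSucc (Fin.last n) (caloricPoly n α) = 0 := by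
  rw [caloricPoly, map_smul, backwardHeatOperator_prod_eq_zero, smul_zero]
  · exact fun j k hkj => pderiv_heatPoly_of_ne (Fin.castSucc_injective n |>.ne hkj)
      (Fin.castSucc_ne_last k) _
  · exact fun j =>
      backwardHeatOperator_heatPoly (Fin.castSucc_injective n) Fin.castSucc_ne_last j _

theorem lap_add_deriv_eval_snoc {n : ℕ} (P : MvPolynomial (Fin (n + 1)) ℝ)
    (x : EuclideanSpace ℝ (Fin n)) (t : ℝ) :
    lap n (fun z => eval (Fin.snoc (fun j => z j) t) P) x +
        deriv (fun τ => eval (Fin.snoc (fun j => x j) τ) P) t =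
      eval (Fin.snoc (fun j => x j) t) (backwardHeatOperator ℝ Fin.castSucc (Fin.last n) P) := by
  set v : Fin (n + 1) → ℝ := Fin.snoc (fun j => x j) t
  have hspace (j : Fin n) : (fun r : ℝ =>
      eval (Fin.snoc (fun k => (x + r • EuclideanSpace.single j (1 : ℝ)) k) t) P) =
        fun r => eval (v + r • Pi.single j.castSucc 1) P := by
    funext r
    refine congrArg (eval · P) (funext fun i => ?_)
    induction i using Fin.lastCases with
    | last => simp [v]
    | cast i => simp [v, Pi.single_apply]
  have hpoint (τ : ℝ) : (Fin.snoc (fun j => x j) τ : Fin (n + 1) → ℝ) =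
      Fin.snoc (fun j => x j) 0 + τ • Pi.single (Fin.last n) 1 := by
    funext i
    induction i using Fin.lastCases with
    | last => simp
    | cast i => simp [Fin.castSucc_ne_last i]
  have htime : (fun τ => eval (Fin.snoc (fun j => x j) τ) P) =
      fun τ => eval (Fin.snoc (fun j => x j) 0 + τ • Pi.single (Fin.last n) 1) P :=
    funext fun τ => by rw [hpoint τ]
  rw [lap, htime, deriv_eval_add_smul_single]
  simp only [hspace, iteratedDeriv_two_eval_add_smul_single, backwardHeatOperator_apply, map_add,
    map_sum, zero_smul, add_zero]
  rw [← hpoint t]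

theorem gaussianTerm_eq_sum_Qfun {n : ℕ} (k : ℕ) (x y : EuclideanSpace ℝ (Fin n)) {s t : ℝ}
    (hs : 0 < s) (ht : 0 < t) :
    (t / s) ^ ((k : ℝ) / 2) * exp (‖x‖ ^ 2 / (8 * t)) * PhiK n k ((2 * √t)⁻¹ • x) y =
      ∑ α ∈ Finset.Nat.antidiagonalTuple n k,
        ((√s)⁻¹ ^ k * hermiteFnN n α y) * Qfun n α x t := by
  rw [rpow_div_two_eq_sqrt _ (div_pos ht hs).le, rpow_natCast, sqrt_div ht.le, PhiK,
    Finset.mul_sum]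
  refine Finset.sum_congr rfl fun α hα => ?_
  rw [Qfun, Finset.Nat.mem_antidiagonalTuple.mp hα, div_eq_mul_inv, mul_pow]
  ring

theorem gaussian_series_terms_polynomial (n k : ℕ) (y : EuclideanSpace ℝ (Fin n)) (s : ℝ)
    (hs : 0 < s) :
    ∃ P : MvPolynomial (Fin (n + 1)) ℝ,
      (∀ (x : EuclideanSpace ℝ (Fin n)) (t : ℝ), 0 < t →
        MvPolynomial.eval (Fin.snoc (fun j => x j) t) P =
          (t / s) ^ ((k : ℝ) / 2) * Real.exp (‖x‖ ^ 2 / (8 * t)) *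
            PhiK n k ((2 * Real.sqrt t)⁻¹ • x) ((2 * Real.sqrt s)⁻¹ • y)) ∧
      (∀ l : ℝ, 0 ≤ l → ∀ (x : EuclideanSpace ℝ (Fin n)) (t : ℝ),
        MvPolynomial.eval (Fin.snoc (fun j => (l • x) j) (l ^ 2 * t)) P =
          l ^ k * MvPolynomial.eval (Fin.snoc (fun j => x j) t) P) ∧
      (∀ (x : EuclideanSpace ℝ (Fin n)) (t : ℝ),
        lap n (fun z => MvPolynomial.eval (Fin.snoc (fun j => z j) t) P) x +
          deriv (fun τ => MvPolynomial.eval (Fin.snoc (fun j => x j) τ) P) t = 0) := by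
  set c : (Fin n → ℕ) → ℝ := fun α => (√s)⁻¹ ^ k * hermiteFnN n α ((2 * √s)⁻¹ • y)
  refine ⟨∑ α ∈ Finset.Nat.antidiagonalTuple n k, c α • caloricPoly n α, ?_, ?_, ?_⟩
  · intro x t ht
    rw [gaussianTerm_eq_sum_Qfun k x _ hs ht, map_sum]
    exact Finset.sum_congr rfl fun α _ => by rw [smul_eval, eval_caloricPoly α x ht]
  · intro l _ x t
    have hP : (∑ α ∈ Finset.Nat.antidiagonalTuple n k,
        c α • caloricPoly n α).IsWeightedHomogeneous (parabolicWeight n) k := by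
      refine IsWeightedHomogeneous.sum _ _ _ fun α hα => ?_
      rw [← C_mul', ← Finset.Nat.mem_antidiagonalTuple.mp hα]
      exact (isWeightedHomogeneous_caloricPoly α).C_mul (c α)
    rw [snoc_smul_eq_pow_parabolicWeight_mul, hP.eval_pow_weight_mul]
  · intro x t
    rw [lap_add_deriv_eval_snoc, map_sum]
    simp [backwardHeatOperator_caloricPoly]
end
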